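/- Define completed-trace formulas of uniform depth over a finite action set 𝒜 by: formulas of depth 0 are finite (possibly empty) disjunctions of the truth constant ⊤; formulas of depth n+1 are finite (possibly empty) disjunctions of formulas that are either the nullary modality ⋆ or of the form ◇σφ with σ ∈ 𝒜 and φ of depth n. For a state x of a finitely branching LTS γ: X → 𝒫ω(𝒜×X), let x ⊨ ⊤ always, x ⊨ ⋆ iff γ(x) = ∅, x ⊨ φ₁∨…∨φₖ iff x ⊨ φᵢ for some i, and x ⊨ ◇σφ iff there is y with (σ,y) ∈ γ(x) and y ⊨ φ. Then two states x, y of finitely branching LTSs are completed trace equivalent if and only if they satisfy exactly the same completed-trace formulas (of all uniform depths). -/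

import Mathlib

universe u v

/-- `Reaches γ x w z` : in the finitely branching LTS `γ`, there is a path from `x`
to `z` whose labels spell the word `w`. -/
inductive Reaches {A : Type u} {X : Type v} (γ : X → Finset (A × X)) : X → List A → X → Prop
  | nil (x : X) : Reaches γ x [] x
  | cons {x : X} {σ : A} {y : X} {w : List A} {z : X} :
      (σ, y) ∈ γ x → Reaches γ y w z → Reaches γ x (σ :: w) z

/-- The ready set `I(x)` of a state. -/
def readySet {A : Type u} {X : Type v} [DecidableEq A]
    (γ : X → Finset (A × X)) (x : X) : Finset A :=
  (γ x).image Prod.fst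

/-- The trace set of a state. -/
def traceSet {A : Type u} {X : Type v} (γ : X → Finset (A × X)) (x : X) : Set (List A) :=
  {w | ∃ z, Reaches γ x w z}

/-- The set of complete traces of a state. -/
def completeTraceSet {A : Type u} {X : Type v} [DecidableEq A]
    (γ : X → Finset (A × X)) (x : X) : Set (List A) :=
  {w | ∃ z, Reaches γ x w z ∧ readySet γ z = ∅}

/-- Completed-trace formulas of uniform depth: a depth-`0` formula is a finite
(possibly empty) disjunction of the truth constant `⊤`; a depth-`(n+1)` formula is a
finite (possibly empty) disjunction of formulas that are either the nullary modality
`⋆` (represented by `none`) or `◇σφ` with `φ` of depth `n` (represented by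
`some (σ, φ)`). -/
@[reducible] def CTFormula (A : Type u) : ℕ → Type u
  | 0 => List PUnit
  | n + 1 => List (Option (A × CTFormula A n))

/-- Satisfaction of completed-trace formulas. -/
def SatCT {A : Type u} {X : Type v} (γ : X → Finset (A × X)) :
    (n : ℕ) → X → CTFormula A n → Prop
  | 0, _, φ => ∃ u, u ∈ φ
  | n + 1, x, φ => ∃ d ∈ φ,
      match d with
      | none => γ x = ∅
      | some (σ, ψ) => ∃ q ∈ γ x, q.1 = σ ∧ SatCT γ n q.2 ψ

/-!
Every completed-trace formula is a finite disjunction of linear formulas `◇σ₁ ⋯ ◇σₖ ⊤`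
and `◇σ₁ ⋯ ◇σₖ ⋆`, which hold at a state exactly when `σ₁ ⋯ σₖ` is a trace, resp. a
complete trace, of it. Hence satisfaction depends only on the two trace sets; conversely
the linear formula of a single word detects whether that word is a (complete) trace.
-/

section

variable {A : Type u} {X : Type v} (γ : X → Finset (A × X))

theorem reaches_nil_iff (x z : X) : Reaches γ x [] z ↔ z = x := by
  constructor
  · rintro ⟨⟩
    rfl
  · rintro rfl
    exact .nil z

theorem reaches_cons_iff (x : X) (σ : A) (w : List A) (z : X) :
    Reaches γ x (σ :: w) z ↔ ∃ y, (σ, y) ∈ γ x ∧ Reaches γ y w z := by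
  constructor
  · rintro ⟨⟩
    exact ⟨_, ‹_›, ‹_›⟩
  · rintro ⟨y, hy, hw⟩
    exact .cons hy hw

theorem nil_mem_traceSet (x : X) : [] ∈ traceSet γ x :=
  ⟨x, .nil x⟩

theorem cons_mem_traceSet_iff (x : X) (σ : A) (w : List A) :
    σ :: w ∈ traceSet γ x ↔ ∃ y, (σ, y) ∈ γ x ∧ w ∈ traceSet γ y := by
  simp only [traceSet, Set.mem_ofPred_eq, reaches_cons_iff]
  tauto

theorem nil_mem_completeTraceSet_iff [DecidableEq A] (x : X) :
    [] ∈ completeTraceSet γ x ↔ γ x = ∅ := by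
  simp [completeTraceSet, reaches_nil_iff, readySet]

theorem cons_mem_completeTraceSet_iff [DecidableEq A] (x : X) (σ : A) (w : List A) :
    σ :: w ∈ completeTraceSet γ x ↔ ∃ y, (σ, y) ∈ γ x ∧ w ∈ completeTraceSet γ y := by
  simp only [completeTraceSet, Set.mem_ofPred_eq, reaches_cons_iff]
  tauto

theorem satCT_zero_iff (x : X) (φ : CTFormula A 0) : SatCT γ 0 x φ ↔ φ ≠ [] := by
  simp only [SatCT]
  exact ⟨fun ⟨_, hu⟩ => List.ne_nil_of_mem hu, List.exists_mem_of_ne_nil φ⟩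

theorem satCT_succ_iff (n : ℕ) (x : X) (φ : CTFormula A (n + 1)) :
    SatCT γ (n + 1) x φ ↔
      (none ∈ φ ∧ γ x = ∅) ∨ ∃ σ ψ, some (σ, ψ) ∈ φ ∧ ∃ y, (σ, y) ∈ γ x ∧ SatCT γ n y ψ := by
  simp only [SatCT]
  constructor
  · rintro ⟨_ | ⟨σ, ψ⟩, hd, hsat⟩
    · exact .inl ⟨hd, hsat⟩
    · obtain ⟨⟨_, y⟩, hy, rfl, hψ⟩ := hsat
      exact .inr ⟨_, ψ, hd, y, hy, hψ⟩
  · rintro (⟨hd, hx⟩ | ⟨σ, ψ, hd, y, hy, hψ⟩)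
    · exact ⟨none, hd, hx⟩
    · exact ⟨some (σ, ψ), hd, (σ, y), hy, rfl, hψ⟩

def IsTraceBranch : (n : ℕ) → CTFormula A n → List A → Prop
  | 0, φ, w => w = [] ∧ φ ≠ []
  | _ + 1, _, [] => False
  | n + 1, φ, σ :: w => ∃ ψ, some (σ, ψ) ∈ φ ∧ IsTraceBranch n ψ w

def IsCompleteBranch : (n : ℕ) → CTFormula A n → List A → Prop
  | 0, _, _ => False
  | _ + 1, φ, [] => none ∈ φ
  | n + 1, φ, σ :: w => ∃ ψ, some (σ, ψ) ∈ φ ∧ IsCompleteBranch n ψ w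

def traceFormula : (w : List A) → CTFormula A w.length
  | [] => [PUnit.unit]
  | σ :: w => [some (σ, traceFormula w)]

def completeTraceFormula : (w : List A) → CTFormula A (w.length + 1)
  | [] => [none]
  | σ :: w => [some (σ, completeTraceFormula w)]

theorem satCT_traceFormula_iff (w : List A) (x : X) :
    SatCT γ w.length x (traceFormula w) ↔ w ∈ traceSet γ x := by
  induction w generalizing x with
  | nil => simp [traceFormula, satCT_zero_iff, nil_mem_traceSet]
  | cons σ w ih => simp [traceFormula, satCT_succ_iff γ w.length, cons_mem_traceSet_iff, ih]

variable [DecidableEq A]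

theorem satCT_iff_exists_branch (n : ℕ) (x : X) (φ : CTFormula A n) :
    SatCT γ n x φ ↔
      (∃ w, IsTraceBranch n φ w ∧ w ∈ traceSet γ x) ∨
        ∃ w, IsCompleteBranch n φ w ∧ w ∈ completeTraceSet γ x := by
  induction n generalizing x with
  | zero => simp [satCT_zero_iff, IsTraceBranch, IsCompleteBranch, nil_mem_traceSet]
  | succ n ih =>
    rw [satCT_succ_iff]
    constructor
    · rintro (⟨hnone, hx⟩ | ⟨σ, ψ, hψ, y, hy, hsat⟩)
      · exact .inr ⟨[], hnone, (nil_mem_completeTraceSet_iff γ x).2 hx⟩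
      rcases (ih y ψ).1 hsat with ⟨w, hw, htr⟩ | ⟨w, hw, hctr⟩
      · exact .inl ⟨σ :: w, ⟨ψ, hψ, hw⟩, (cons_mem_traceSet_iff γ x σ w).2 ⟨y, hy, htr⟩⟩
      · exact .inr ⟨σ :: w, ⟨ψ, hψ, hw⟩, (cons_mem_completeTraceSet_iff γ x σ w).2 ⟨y, hy, hctr⟩⟩
    · rintro (⟨_ | ⟨σ, w⟩, hw, htr⟩ | ⟨_ | ⟨σ, w⟩, hw, hctr⟩)
      · exact hw.elim
      · obtain ⟨ψ, hψ, hw⟩ := hw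
        obtain ⟨y, hy, htr⟩ := (cons_mem_traceSet_iff γ x σ w).1 htr
        exact .inr ⟨σ, ψ, hψ, y, hy, (ih y ψ).2 (.inl ⟨w, hw, htr⟩)⟩
      · exact .inl ⟨hw, (nil_mem_completeTraceSet_iff γ x).1 hctr⟩
      · obtain ⟨ψ, hψ, hw⟩ := hw
        obtain ⟨y, hy, hctr⟩ := (cons_mem_completeTraceSet_iff γ x σ w).1 hctr
        exact .inr ⟨σ, ψ, hψ, y, hy, (ih y ψ).2 (.inr ⟨w, hw, hctr⟩)⟩

theorem satCT_completeTraceFormula_iff (w : List A) (x : X) :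
    SatCT γ (w.length + 1) x (completeTraceFormula w) ↔ w ∈ completeTraceSet γ x := by
  induction w generalizing x with
  | nil => simp [completeTraceFormula, satCT_succ_iff, nil_mem_completeTraceSet_iff]
  | cons σ w ih =>
    simp [completeTraceFormula, satCT_succ_iff γ (w.length + 1), cons_mem_completeTraceSet_iff, ih]

end

theorem completed_trace_equiv_iff_same_formulas_general {A : Type u} [DecidableEq A]
    {X Y : Type v} (γ : X → Finset (A × X)) (δ : Y → Finset (A × Y)) (x : X) (y : Y) :
    (traceSet γ x = traceSet δ y ∧ completeTraceSet γ x = completeTraceSet δ y) ↔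
      ∀ (n : ℕ) (φ : CTFormula A n), (SatCT γ n x φ ↔ SatCT δ n y φ) := by
  constructor
  · rintro ⟨htr, hctr⟩ n φ
    rw [satCT_iff_exists_branch, satCT_iff_exists_branch, htr, hctr]
  · intro hsat
    constructor
    · ext w
      rw [← satCT_traceFormula_iff γ w x, ← satCT_traceFormula_iff δ w y]
      exact hsat w.length (traceFormula w)
    · ext w
      rw [← satCT_completeTraceFormula_iff γ w x, ← satCT_completeTraceFormula_iff δ w y]
      exact hsat (w.length + 1) (completeTraceFormula w)

/-- Two states of finitely branching LTSs are completed trace equivalent iff they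
satisfy exactly the same completed-trace formulas of all uniform depths. -/
theorem completed_trace_equiv_iff_same_formulas {A : Type u} [Fintype A] [DecidableEq A]
    {X Y : Type v} (γ : X → Finset (A × X)) (δ : Y → Finset (A × Y)) (x : X) (y : Y) :
    (traceSet γ x = traceSet δ y ∧ completeTraceSet γ x = completeTraceSet δ y) ↔
      ∀ (n : ℕ) (φ : CTFormula A n), (SatCT γ n x φ ↔ SatCT δ n y φ) :=
  completed_trace_equiv_iff_same_formulas_general γ δ x y
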